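/- arXiv:2307.02842 — 6 statements merged into one kernel-verified Lean document; each statement's English description precedes it below -/
import Mathlib

section
/- Let S be a finite nonempty set, let p be a probability mass function on S, let α ∈ (0,1], let H > 0 and ε > 0 be reals, and let V : S → ℝ satisfy 0 ≤ V(s) ≤ H for all s ∈ S. Let N_ε := {nε : n ∈ ℕ, 0 ≤ n ≤ ⌊H/ε⌋} be the discrete ε-net of [0,H]. Then |max_{x ∈ N_ε} { x − (1/α) Σ_{s∈S} p(s)(x − V(s))⁺ } − sup_{x ∈ ℝ} { x − (1/α) Σ_{s∈S} p(s)(x − V(s))⁺ }| ≤ 2ε. In particular, taking the supremum defining CVaR over the finite net N_ε instead of over ℝ incurs error at most 2ε. -/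
/-!
The objective `f x = x − (1/α) Σ p(s) (x − V(s))⁺` is `x` left of `min V`, has slope `1 − 1/α ≤ 0`
right of `max V`, and increases by at most `x − y` from `y` to `x ≥ y`. Hence its supremum is attained
on `[0, H]`, and rounding a point of `[0, H]` down to the ε-net loses at most `ε`.
-/

/-- The Conditional Value-at-Risk of `V` under pmf `p` at risk level `α`:
`CVaR^α_p(V) = sup_{x ∈ ℝ} { x − (1/α) Σ_s p(s) (x − V(s))⁺ }`. -/
noncomputable def cvar {S : Type*} [Fintype S] (α : ℝ) (p V : S → ℝ) : ℝ :=
  ⨆ x : ℝ, (x - (1 / α) * ∑ s, p s * max (x - V s) 0)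

lemma Nat.floor_div_mul_le_and_lt_add {y ε : ℝ} (hy : 0 ≤ y) (hε : 0 < ε) :
    ⌊y / ε⌋₊ * ε ≤ y ∧ y < ⌊y / ε⌋₊ * ε + ε := by
  constructor
  · exact (le_div_iff₀ hε).mp (Nat.floor_le (div_nonneg hy hε.le))
  · have h := (div_lt_iff₀ hε).mp (Nat.lt_floor_add_one (y / ε))
    linarith

namespace CVaR

variable {S : Type*} [Fintype S] {α : ℝ} {p V : S → ℝ}

noncomputable def objective (α : ℝ) (p V : S → ℝ) (x : ℝ) : ℝ :=
  x - (1 / α) * ∑ s, p s * max (x - V s) 0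

lemma objective_le_self (hα : 0 < α) (hp : ∀ s, 0 ≤ p s) (x : ℝ) : objective α p V x ≤ x := by
  have : 0 ≤ (1 / α) * ∑ s, p s * max (x - V s) 0 :=
    mul_nonneg (by positivity) (Finset.sum_nonneg fun s _ => mul_nonneg (hp s) (le_max_right _ _))
  unfold objective
  linarith

lemma objective_le_add_sub (hα : 0 < α) (hp : ∀ s, 0 ≤ p s) {x y : ℝ} (hyx : y ≤ x) :
    objective α p V x ≤ objective α p V y + (x - y) := by
  have hsum : ∑ s, p s * max (y - V s) 0 ≤ ∑ s, p s * max (x - V s) 0 :=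
    Finset.sum_le_sum fun s _ => mul_le_mul_of_nonneg_left (by gcongr) (hp s)
  have := mul_le_mul_of_nonneg_left hsum (one_div_nonneg.mpr hα.le)
  unfold objective
  linarith

lemma objective_eq_self_of_forall_le {x : ℝ} (hx : ∀ s, x ≤ V s) : objective α p V x = x := by
  simp [objective, fun s => max_eq_right (sub_nonpos.mpr (hx s))]

lemma sum_mul_max_sub_eq_add_of_forall_le (hp : ∑ s, p s = 1) {x y : ℝ} (hy : ∀ s, V s ≤ y)
    (hyx : y ≤ x) :
    ∑ s, p s * max (x - V s) 0 = ∑ s, p s * max (y - V s) 0 + (x - y) := by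
  have hterm : ∀ s, p s * max (x - V s) 0 = p s * max (y - V s) 0 + p s * (x - y) := fun s => by
    rw [max_eq_left (by linarith [hy s]), max_eq_left (by linarith [hy s])]
    ring
  simp only [hterm, Finset.sum_add_distrib, ← Finset.sum_mul, hp, one_mul]

lemma objective_le_of_forall_le (hα : α ∈ Set.Ioc 0 1) (hp : ∑ s, p s = 1) {x y : ℝ}
    (hy : ∀ s, V s ≤ y) (hyx : y ≤ x) : objective α p V x ≤ objective α p V y := by
  have hslope : 1 ≤ 1 / α := by rw [le_div_iff₀ hα.1]; linarith [hα.2]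
  have := mul_le_mul_of_nonneg_left hslope (sub_nonneg.mpr hyx)
  simp only [objective, sum_mul_max_sub_eq_add_of_forall_le hp hy hyx]
  nlinarith

lemma exists_mem_Icc_objective_le (hα : α ∈ Set.Ioc 0 1) (hp0 : ∀ s, 0 ≤ p s)
    (hp1 : ∑ s, p s = 1) {H : ℝ} (hH : 0 ≤ H) (hV : ∀ s, V s ∈ Set.Icc 0 H) (x : ℝ) :
    ∃ y ∈ Set.Icc 0 H, objective α p V x ≤ objective α p V y := by
  rcases le_or_gt x 0 with hx0 | hx0
  · refine ⟨0, Set.left_mem_Icc.mpr hH, ?_⟩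
    rw [objective_eq_self_of_forall_le fun s => (hV s).1]
    exact (objective_le_self hα.1 hp0 x).trans hx0
  rcases le_or_gt x H with hxH | hxH
  · exact ⟨x, ⟨hx0.le, hxH⟩, le_rfl⟩
  · exact ⟨H, Set.right_mem_Icc.mpr hH,
      objective_le_of_forall_le hα hp1 (fun s => (hV s).2) hxH.le⟩

lemma bddAbove_range_objective (hα : α ∈ Set.Ioc 0 1) (hp0 : ∀ s, 0 ≤ p s)
    (hp1 : ∑ s, p s = 1) {H : ℝ} (hH : 0 ≤ H) (hV : ∀ s, V s ∈ Set.Icc 0 H) :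
    BddAbove (Set.range (objective α p V)) := by
  refine ⟨H, Set.forall_mem_range.mpr fun x => ?_⟩
  obtain ⟨y, hy, hxy⟩ := exists_mem_Icc_objective_le hα hp0 hp1 hH hV x
  exact hxy.trans ((objective_le_self hα.1 hp0 y).trans hy.2)

lemma cvar_le_sup'_net_add (hα : α ∈ Set.Ioc 0 1) (hp0 : ∀ s, 0 ≤ p s)
    (hp1 : ∑ s, p s = 1) {H ε : ℝ} (hH : 0 ≤ H) (hε : 0 < ε) (hV : ∀ s, V s ∈ Set.Icc 0 H) :
    cvar α p V ≤ (Finset.range (⌊H / ε⌋₊ + 1)).sup' Finset.nonempty_range_add_one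
      (fun n => objective α p V (n * ε)) + ε := by
  refine ciSup_le fun x => ?_
  obtain ⟨y, hy, hxy⟩ := exists_mem_Icc_objective_le hα hp0 hp1 hH hV x
  obtain ⟨hny, hyn⟩ := Nat.floor_div_mul_le_and_lt_add hy.1 hε
  have hmem : ⌊y / ε⌋₊ ∈ Finset.range (⌊H / ε⌋₊ + 1) :=
    Finset.mem_range_succ_iff.mpr (Nat.floor_le_floor (by gcongr; exact hy.2))
  have hnet := Finset.le_sup' (fun n : ℕ => objective α p V (n * ε)) hmem
  have hround := objective_le_add_sub (V := V) hα.1 hp0 hny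
  change objective α p V x ≤ _
  linarith

lemma sup'_net_le_cvar (hα : α ∈ Set.Ioc 0 1) (hp0 : ∀ s, 0 ≤ p s)
    (hp1 : ∑ s, p s = 1) {H : ℝ} (hH : 0 ≤ H) (hV : ∀ s, V s ∈ Set.Icc 0 H) {ε : ℝ} (N : ℕ) :
    (Finset.range (N + 1)).sup' Finset.nonempty_range_add_one
      (fun n => objective α p V (n * ε)) ≤ cvar α p V :=
  Finset.sup'_le _ _ fun _ _ => le_ciSup (bddAbove_range_objective hα hp0 hp1 hH hV) _

end CVaR

open CVaR in
theorem stmt_0_general {S : Type*} [Fintype S]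
    (p : S → ℝ) (hp0 : ∀ s, 0 ≤ p s) (hp1 : ∑ s, p s = 1)
    (α : ℝ) (hα : α ∈ Set.Ioc (0 : ℝ) 1)
    (H ε : ℝ) (hH : 0 < H) (hε : 0 < ε)
    (V : S → ℝ) (hV : ∀ s, V s ∈ Set.Icc (0 : ℝ) H) :
    |(Finset.range (⌊H / ε⌋₊ + 1)).sup'
        (Finset.nonempty_range_iff.mpr (Nat.succ_ne_zero _))
        (fun n => (n : ℝ) * ε - (1 / α) * ∑ s, p s * max ((n : ℝ) * ε - V s) 0)
      - cvar α p V| ≤ 2 * ε := by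
  have hlower := sup'_net_le_cvar hα hp0 hp1 hH.le hV (ε := ε) ⌊H / ε⌋₊
  have hupper := cvar_le_sup'_net_add hα hp0 hp1 hH.le hε hV
  rw [abs_le]
  constructor <;> simp only [objective] at hlower hupper <;> linarith

/-- Taking the supremum defining CVaR over the finite ε-net
`N_ε = {nε : 0 ≤ n ≤ ⌊H/ε⌋}` instead of over ℝ incurs error at most `2ε`. -/
theorem stmt_0 {S : Type*} [Fintype S] [Nonempty S]
    (p : S → ℝ) (hp0 : ∀ s, 0 ≤ p s) (hp1 : ∑ s, p s = 1)
    (α : ℝ) (hα : α ∈ Set.Ioc (0 : ℝ) 1)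
    (H ε : ℝ) (hH : 0 < H) (hε : 0 < ε)
    (V : S → ℝ) (hV : ∀ s, V s ∈ Set.Icc (0 : ℝ) H) :
    |(Finset.range (⌊H / ε⌋₊ + 1)).sup'
        (Finset.nonempty_range_iff.mpr (Nat.succ_ne_zero _))
        (fun n => (n : ℝ) * ε - (1 / α) * ∑ s, p s * max ((n : ℝ) * ε - V s) 0)
      - cvar α p V| ≤ 2 * ε :=
  stmt_0_general p hp0 hp1 α hα H ε hH hε V hV
end

section
/- Let S be a finite nonempty set, let p be a probability mass function on S, let α ∈ (0,1], and let V : S → ℝ. Define the Value-at-Risk x* := VaR^α_p(V) := min{ x ∈ ℝ : Σ_{s : V(s) ≤ x} p(s) ≥ α } (this minimum exists since V takes finitely many values). Then the supremum defining CVaR is attained at x*: CVaR^α_p(V) = x* − (1/α) Σ_{s∈S} p(s)(x* − V(s))⁺. -/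
/-!
Let `g(x) = Σ_s p(s) (x − V(s))⁺`. Since `CVaR` is the supremum of `x − g(x)/α`, it suffices that
`α` is a subgradient of the convex function `g` at `x*`, i.e. `α (x − x*) ≤ g(x) − g(x*)` for all
`x`. The one-sided derivatives of `g` at `y` are `P(V ≤ y)` and `P(V < y)`, and minimality of `x*`
gives exactly `P(V < x*) ≤ α ≤ P(V ≤ x*)`: for the lower bound, `{V < x*} = {V ≤ y}` for the
largest value `y < x*` of `V`.
-/

open Finset

lemma ite_le_sub_le_max_sub_max {x y : ℝ} (v : ℝ) (h : y ≤ x) :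
    (if v ≤ y then x - y else 0) ≤ max (x - v) 0 - max (y - v) 0 := by
  split_ifs with hv
  · rw [max_eq_left (by linarith), max_eq_left (by linarith)]
    linarith
  · linarith [max_le_max_right 0 (show y - v ≤ x - v by linarith)]

lemma ite_lt_sub_le_max_sub_max {x y : ℝ} (v : ℝ) (h : x ≤ y) :
    (if v < y then x - y else 0) ≤ max (x - v) 0 - max (y - v) 0 := by
  split_ifs with hv
  · rw [max_eq_left (by linarith : 0 ≤ y - v)]
    linarith [le_max_left (x - v) 0]
  · rw [max_eq_right (by linarith), max_eq_right (by linarith)]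
    linarith

section Subgradient

variable {S : Type*} [Fintype S] {p V : S → ℝ}

lemma sum_mul_sub_eq_sum_ite (q : S → Prop) [DecidablePred q] (x y : ℝ) :
    (∑ s ∈ univ.filter q, p s) * (x - y) = ∑ s, p s * (if q s then x - y else 0) := by
  rw [sum_filter, sum_mul]
  refine sum_congr rfl fun s _ => ?_
  split_ifs <;> ring

lemma mul_sub_le_sum_mul_max_sub_max (hp : ∀ s, 0 ≤ p s) {α y : ℝ}
    (hlo : ∑ s ∈ univ.filter (fun s => V s < y), p s ≤ α)
    (hhi : α ≤ ∑ s ∈ univ.filter (fun s => V s ≤ y), p s) (x : ℝ) :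
    α * (x - y) ≤ ∑ s, p s * (max (x - V s) 0 - max (y - V s) 0) := by
  rcases le_total y x with hyx | hxy
  · calc α * (x - y) ≤ (∑ s ∈ univ.filter (fun s => V s ≤ y), p s) * (x - y) :=
          mul_le_mul_of_nonneg_right hhi (by linarith)
      _ = ∑ s, p s * (if V s ≤ y then x - y else 0) := sum_mul_sub_eq_sum_ite _ x y
      _ ≤ _ := sum_le_sum fun s _ =>
          mul_le_mul_of_nonneg_left (ite_le_sub_le_max_sub_max (V s) hyx) (hp s)
  · calc α * (x - y) ≤ (∑ s ∈ univ.filter (fun s => V s < y), p s) * (x - y) :=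
          mul_le_mul_of_nonpos_right hlo (by linarith)
      _ = ∑ s, p s * (if V s < y then x - y else 0) := sum_mul_sub_eq_sum_ite _ x y
      _ ≤ _ := sum_le_sum fun s _ =>
          mul_le_mul_of_nonneg_left (ite_lt_sub_le_max_sub_max (V s) hxy) (hp s)

lemma sum_filter_lt_le_of_isLeast {α y : ℝ} (hα : 0 ≤ α)
    (hy : IsLeast {x : ℝ | α ≤ ∑ s ∈ univ.filter (fun s => V s ≤ x), p s} y) :
    ∑ s ∈ univ.filter (fun s => V s < y), p s ≤ α := by
  set T := univ.filter (fun s => V s < y)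
  rcases T.eq_empty_or_nonempty with hT | hT
  · simpa [hT] using hα
  obtain ⟨s₀, hs₀, hmax⟩ := T.exists_max_image V hT
  have hs₀y : V s₀ < y := (mem_filter.1 hs₀).2
  have hT_eq : univ.filter (fun s => V s ≤ V s₀) = T := by
    ext s
    simp only [T, mem_filter, mem_univ, true_and]
    exact ⟨fun h => h.trans_lt hs₀y, fun h => hmax s (by simpa [T] using h)⟩
  by_contra! h
  have : y ≤ V s₀ := hy.2 (show α ≤ _ by rw [hT_eq]; exact h.le)
  linarith

lemma sub_le_sub_of_mul_sub_le {α x y : ℝ} (hα : 0 < α) (f : ℝ → ℝ)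
    (h : α * (x - y) ≤ f x - f y) : x - (1 / α) * f x ≤ y - (1 / α) * f y := by
  have : x - y ≤ (1 / α) * (f x - f y) := by
    rw [one_div, le_inv_mul_iff₀ hα]
    exact h
  rw [mul_sub] at this
  linarith

end Subgradient

theorem stmt_2_general {S : Type*} [Fintype S]
    (p : S → ℝ) (hp0 : ∀ s, 0 ≤ p s)
    (α : ℝ) (hα : α ∈ Set.Ioc (0 : ℝ) 1)
    (V : S → ℝ) (xstar : ℝ)
    (hxstar : IsLeast {x : ℝ | α ≤ ∑ s ∈ Finset.univ.filter (fun s => V s ≤ x), p s} xstar) :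
    cvar α p V = xstar - (1 / α) * ∑ s, p s * max (xstar - V s) 0 := by
  have hlo := sum_filter_lt_le_of_isLeast hα.1.le hxstar
  have hmax : ∀ x : ℝ, x - (1 / α) * ∑ s, p s * max (x - V s) 0 ≤
      xstar - (1 / α) * ∑ s, p s * max (xstar - V s) 0 := fun x =>
    sub_le_sub_of_mul_sub_le hα.1 (fun x => ∑ s, p s * max (x - V s) 0) <| by
      rw [← sum_sub_distrib]
      simpa only [mul_sub] using mul_sub_le_sum_mul_max_sub_max hp0 hlo hxstar.1 x
  exact le_antisymm (ciSup_le hmax) (le_ciSup ⟨_, Set.forall_mem_range.mpr hmax⟩ xstar)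

/-- The supremum defining CVaR is attained at the Value-at-Risk
`x* = VaR^α_p(V) = min{ x : Σ_{s : V(s) ≤ x} p(s) ≥ α }`. -/
theorem stmt_2 {S : Type*} [Fintype S] [Nonempty S]
    (p : S → ℝ) (hp0 : ∀ s, 0 ≤ p s) (hp1 : ∑ s, p s = 1)
    (α : ℝ) (hα : α ∈ Set.Ioc (0 : ℝ) 1)
    (V : S → ℝ) (xstar : ℝ)
    (hxstar : IsLeast {x : ℝ | α ≤ ∑ s ∈ Finset.univ.filter (fun s => V s ≤ x), p s} xstar) :
    cvar α p V = xstar - (1 / α) * ∑ s, p s * max (xstar - V s) 0 :=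
  stmt_2_general p hp0 α hα V xstar hxstar
end

section
/- Let S and A be finite nonempty sets, let H ≥ 1 be an integer, let α ∈ (0,1], let P_h(·|s,a) be a probability mass function on S for each h ∈ {1,…,H} and (s,a) ∈ S×A, and let r_h : S×A → [0,1] for each h ∈ {1,…,H}. Define the optimal Iterated-CVaR value functions backward by V*_{H+1}(s) := 0, Q*_h(s,a) := r_h(s,a) + CVaR^α_{P_h(·|s,a)}(V*_{h+1}), and V*_h(s) := max_{a∈A} Q*_h(s,a). Suppose for each h ∈ {1,…,H} we are given Q̂_h : S×A → ℝ and V̂_h : S → ℝ with V̂_{H+1}(s) := 0 such that for all h, s, a: Q̂_h(s,a) ≥ r_h(s,a) + CVaR^α_{P_h(·|s,a)}(V̂_{h+1}) and V̂_h(s) = min{ max_{a∈A} Q̂_h(s,a), H }. Then V̂_h(s) ≥ V*_h(s) for all h ∈ {1,…,H+1} and all s ∈ S (optimism of the truncated upper-confidence value iteration). -/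
noncomputable def cvarObjective {S : Type*} [Fintype S] (α : ℝ) (p V : S → ℝ) (x : ℝ) : ℝ :=
  x - (1 / α) * ∑ s, p s * max (x - V s) 0

section CVaR

variable {S : Type*} [Fintype S] {α : ℝ} {p V W : S → ℝ}

lemma cvarObjective_mono (hα : 0 ≤ α) (hp : ∀ s, 0 ≤ p s) (hVW : V ≤ W) (x : ℝ) :
    cvarObjective α p V x ≤ cvarObjective α p W x := by
  unfold cvarObjective
  gcongr with s
  · exact hp s
  · exact hVW s

lemma cvarObjective_le_of_forall_le (hα : α ∈ Set.Ioc 0 1) (hp0 : ∀ s, 0 ≤ p s)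
    (hp1 : ∑ s, p s = 1) {c : ℝ} (hV : ∀ s, V s ≤ c) (x : ℝ) :
    cvarObjective α p V x ≤ c := by
  unfold cvarObjective
  have hsum_nonneg : 0 ≤ ∑ s, p s * max (x - V s) 0 :=
    Finset.sum_nonneg fun s _ => mul_nonneg (hp0 s) (le_max_right _ _)
  have hinv : 1 ≤ 1 / α := one_le_one_div hα.1 hα.2
  rcases le_or_gt x c with hxc | hcx
  · nlinarith
  · have hsum : x - c ≤ ∑ s, p s * max (x - V s) 0 :=
      calc x - c = ∑ s, p s * (x - c) := by rw [← Finset.sum_mul, hp1, one_mul]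
        _ ≤ ∑ s, p s * max (x - V s) 0 := by
          gcongr with s
          · exact hp0 s
          · exact le_max_of_le_left (by linarith [hV s])
    nlinarith

lemma cvar_le_of_forall_le (hα : α ∈ Set.Ioc 0 1) (hp0 : ∀ s, 0 ≤ p s)
    (hp1 : ∑ s, p s = 1) {c : ℝ} (hV : ∀ s, V s ≤ c) : cvar α p V ≤ c :=
  ciSup_le (cvarObjective_le_of_forall_le hα hp0 hp1 hV)

lemma cvar_mono (hα : α ∈ Set.Ioc 0 1) (hp0 : ∀ s, 0 ≤ p s) (hp1 : ∑ s, p s = 1)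
    (hVW : V ≤ W) : cvar α p V ≤ cvar α p W := by
  obtain ⟨c, hc⟩ := (Set.finite_range W).bddAbove
  have hbdd : BddAbove (Set.range (cvarObjective α p W)) :=
    ⟨c, Set.forall_mem_range.2 <|
      cvarObjective_le_of_forall_le hα hp0 hp1 fun s => hc ⟨s, rfl⟩⟩
  exact ciSup_mono hbdd (cvarObjective_mono hα.1.le hp0 hVW)

end CVaR
theorem stmt_8_general {S A : Type*} [Fintype S] [Fintype A] [Nonempty A]
    (H : ℕ) (α : ℝ) (hα : α ∈ Set.Ioc (0 : ℝ) 1)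
    (P : ℕ → S → A → S → ℝ)
    (hP0 : ∀ h ∈ Finset.Icc 1 H, ∀ s a s', 0 ≤ P h s a s')
    (hP1 : ∀ h ∈ Finset.Icc 1 H, ∀ s a, ∑ s', P h s a s' = 1)
    (r : ℕ → S → A → ℝ)
    (hr : ∀ h ∈ Finset.Icc 1 H, ∀ s a, r h s a ∈ Set.Icc (0 : ℝ) 1)
    (Qstar : ℕ → S → A → ℝ) (Vstar : ℕ → S → ℝ)
    (hVstarTop : ∀ s, Vstar (H + 1) s = 0)
    (hQstar : ∀ h ∈ Finset.Icc 1 H, ∀ s a,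
      Qstar h s a = r h s a + cvar α (P h s a) (Vstar (h + 1)))
    (hVstar : ∀ h ∈ Finset.Icc 1 H, ∀ s,
      Vstar h s = Finset.univ.sup' Finset.univ_nonempty (Qstar h s))
    (Qhat : ℕ → S → A → ℝ) (Vhat : ℕ → S → ℝ)
    (hVhatTop : ∀ s, Vhat (H + 1) s = 0)
    (hQhat : ∀ h ∈ Finset.Icc 1 H, ∀ s a,
      r h s a + cvar α (P h s a) (Vhat (h + 1)) ≤ Qhat h s a)
    (hVhat : ∀ h ∈ Finset.Icc 1 H, ∀ s,
      Vhat h s = min (Finset.univ.sup' Finset.univ_nonempty (Qhat h s)) (H : ℝ)) :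
    ∀ h ∈ Finset.Icc 1 (H + 1), ∀ s, Vstar h s ≤ Vhat h s := by
  have hmem {k : ℕ} (hk : k < H + 1) (hk1 : 1 ≤ k) : k ∈ Finset.Icc 1 H :=
    Finset.mem_Icc.2 ⟨hk1, Nat.lt_succ_iff.1 hk⟩
  have hVstar_le {h : ℕ} (hh : h ≤ H + 1) : 1 ≤ h → ∀ s, Vstar h s ≤ H + 1 - h := by
    induction hh using Nat.decreasingInduction with
    | self => intro _ s; simp [hVstarTop]
    | of_succ k hk ih =>
      intro hk1 s
      have hkH := hmem hk hk1
      rw [hVstar k hkH s]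
      refine Finset.sup'_le _ _ fun a _ => ?_
      have hcvar := cvar_le_of_forall_le hα (hP0 k hkH s a) (hP1 k hkH s a) (ih (by omega))
      rw [hQstar k hkH s a]
      push_cast at hcvar
      linarith [(hr k hkH s a).2]
  simp only [Finset.mem_Icc, and_imp]
  intro h hh1 hhH
  revert hh1
  induction hhH using Nat.decreasingInduction with
  | self => intro _ s; simp [hVstarTop, hVhatTop]
  | of_succ k hk ih =>
    intro hk1 s
    have hkH := hmem hk hk1
    rw [hVhat k hkH s]
    refine le_min ?_ ?_
    · rw [hVstar k hkH s]
      refine Finset.sup'_mono_fun fun a _ => ?_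
      rw [hQstar k hkH s a]
      have hmono := cvar_mono hα (hP0 k hkH s a) (hP1 k hkH s a) (ih (by omega))
      linarith [hQhat k hkH s a]
    · linarith [hVstar_le hk.le hk1 s, (show (1 : ℝ) ≤ k by exact_mod_cast hk1)]

/-- Optimism of truncated upper-confidence value iteration for Iterated CVaR:
if `Q̂_h ≥ r_h + CVaR^α_{P_h}(V̂_{h+1})` and `V̂_h = min{max_a Q̂_h, H}`, then
`V̂_h ≥ V*_h` for all steps `h ∈ {1,…,H+1}`. -/
theorem stmt_8 {S A : Type*} [Fintype S] [Nonempty S] [Fintype A] [Nonempty A]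
    (H : ℕ) (hH : 1 ≤ H) (α : ℝ) (hα : α ∈ Set.Ioc (0 : ℝ) 1)
    (P : ℕ → S → A → S → ℝ)
    (hP0 : ∀ h ∈ Finset.Icc 1 H, ∀ s a s', 0 ≤ P h s a s')
    (hP1 : ∀ h ∈ Finset.Icc 1 H, ∀ s a, ∑ s', P h s a s' = 1)
    (r : ℕ → S → A → ℝ)
    (hr : ∀ h ∈ Finset.Icc 1 H, ∀ s a, r h s a ∈ Set.Icc (0 : ℝ) 1)
    (Qstar : ℕ → S → A → ℝ) (Vstar : ℕ → S → ℝ)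
    (hVstarTop : ∀ s, Vstar (H + 1) s = 0)
    (hQstar : ∀ h ∈ Finset.Icc 1 H, ∀ s a,
      Qstar h s a = r h s a + cvar α (P h s a) (Vstar (h + 1)))
    (hVstar : ∀ h ∈ Finset.Icc 1 H, ∀ s,
      Vstar h s = Finset.univ.sup' Finset.univ_nonempty (Qstar h s))
    (Qhat : ℕ → S → A → ℝ) (Vhat : ℕ → S → ℝ)
    (hVhatTop : ∀ s, Vhat (H + 1) s = 0)
    (hQhat : ∀ h ∈ Finset.Icc 1 H, ∀ s a,
      r h s a + cvar α (P h s a) (Vhat (h + 1)) ≤ Qhat h s a)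
    (hVhat : ∀ h ∈ Finset.Icc 1 H, ∀ s,
      Vhat h s = min (Finset.univ.sup' Finset.univ_nonempty (Qhat h s)) (H : ℝ)) :
    ∀ h ∈ Finset.Icc 1 (H + 1), ∀ s, Vstar h s ≤ Vhat h s :=
  stmt_8_general H α hα P hP0 hP1 r hr Qstar Vstar hVstarTop hQstar hVstar Qhat Vhat hVhatTop hQhat
    hVhat
end

section
/- Let S be a finite nonempty set, let p be a probability mass function on S, and let V : S → ℝ. If the risk level α satisfies 0 < α ≤ min{ p(s) : s ∈ S, p(s) > 0 }, then CVaR^α_p(V) = min{ V(s) : s ∈ S, p(s) > 0 }. In particular, as α → 0⁺ the CVaR tends to the minimum of V over the support of p. -/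
section

variable {S : Type*} [Fintype S] {α : ℝ} {p V : S → ℝ}

theorem cvar_eq_iSup_cvarObjective : cvar α p V = ⨆ x, cvarObjective α p V x := rfl

theorem cvarObjective_le_of_le_prob (hα : 0 < α) (hp0 : ∀ s, 0 ≤ p s) {s₀ : S}
    (hs₀ : α ≤ p s₀) (x : ℝ) : cvarObjective α p V x ≤ V s₀ := by
  have hpenalty : α * max (x - V s₀) 0 ≤ ∑ s, p s * max (x - V s) 0 :=
    calc α * max (x - V s₀) 0 ≤ p s₀ * max (x - V s₀) 0 :=
          mul_le_mul_of_nonneg_right hs₀ (le_max_right _ _)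
      _ ≤ ∑ s, p s * max (x - V s) 0 :=
          Finset.single_le_sum (f := fun s => p s * max (x - V s) 0)
            (fun s _ => mul_nonneg (hp0 s) (le_max_right _ _)) (Finset.mem_univ s₀)
  calc cvarObjective α p V x ≤ x - (1 / α) * (α * max (x - V s₀) 0) := by
        unfold cvarObjective
        gcongr
    _ = x - max (x - V s₀) 0 := by field_simp
    _ ≤ V s₀ := by linarith [le_max_left (x - V s₀) 0]

theorem cvarObjective_eq_self (hp0 : ∀ s, 0 ≤ p s) {x : ℝ}
    (hx : ∀ s, 0 < p s → x ≤ V s) : cvarObjective α p V x = x := by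
  have hterm : ∀ s, p s * max (x - V s) 0 = 0 := by
    intro s
    rcases (hp0 s).lt_or_eq with hs | hs
    · rw [max_eq_right (by linarith [hx s hs]), mul_zero]
    · rw [← hs, zero_mul]
  simp [cvarObjective, hterm]

theorem cvar_eq_of_isLeast (hα : 0 < α) (hp0 : ∀ s, 0 ≤ p s)
    (hαp : ∀ s, 0 < p s → α ≤ p s) {m : ℝ} (hm : IsLeast (V '' {s | 0 < p s}) m) :
    cvar α p V = m := by
  obtain ⟨⟨s₀, hs₀, rfl⟩, hlower⟩ := hm
  have hbound : ∀ x, cvarObjective α p V x ≤ V s₀ :=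
    cvarObjective_le_of_le_prob hα hp0 (hαp s₀ hs₀)
  have hattained : cvarObjective α p V (V s₀) = V s₀ :=
    cvarObjective_eq_self hp0 fun s hs => hlower ⟨s, hs, rfl⟩
  rw [cvar_eq_iSup_cvarObjective]
  exact le_antisymm (ciSup_le hbound)
    (hattained ▸ le_ciSup ⟨V s₀, Set.forall_mem_range.2 hbound⟩ (V s₀))

end

theorem exists_pos_of_sum_eq_one {S : Type*} [Fintype S] {p : S → ℝ} (hp0 : ∀ s, 0 ≤ p s)
    (hp1 : ∑ s, p s = 1) : ∃ s, 0 < p s := by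
  obtain ⟨s, -, hs⟩ := Finset.exists_ne_zero_of_sum_ne_zero (hp1 ▸ one_ne_zero)
  exact ⟨s, (hp0 s).lt_of_ne' hs⟩

theorem stmt_12_general {S : Type*} [Fintype S]
    (p : S → ℝ) (hp0 : ∀ s, 0 ≤ p s) (hp1 : ∑ s, p s = 1)
    (α : ℝ) (hα : α ∈ Set.Ioc (0 : ℝ) 1)
    (hαp : ∀ s, 0 < p s → α ≤ p s) (V : S → ℝ) :
    cvar α p V = sInf (V '' {s | 0 < p s}) := by
  have hne : (V '' {s | 0 < p s}).Nonempty :=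
    Set.Nonempty.image V (exists_pos_of_sum_eq_one hp0 hp1)
  have hfin : (V '' {s | 0 < p s}).Finite := (Set.toFinite _).image V
  exact cvar_eq_of_isLeast hα.1 hp0 hαp
    ⟨hne.csInf_mem hfin, fun _ hv => csInf_le hfin.bddBelow hv⟩

/-- If `0 < α ≤ min{p(s) : p(s) > 0}`, then `CVaR^α_p(V)` equals the minimum
of `V` over the support of `p`; in particular, as `α → 0⁺` the CVaR tends to
this minimum. -/
theorem stmt_12 {S : Type*} [Fintype S] [Nonempty S]
    (p : S → ℝ) (hp0 : ∀ s, 0 ≤ p s) (hp1 : ∑ s, p s = 1)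
    (α : ℝ) (hα : α ∈ Set.Ioc (0 : ℝ) 1)
    (hαp : ∀ s, 0 < p s → α ≤ p s) (V : S → ℝ) :
    cvar α p V = sInf (V '' {s | 0 < p s}) :=
  stmt_12_general p hp0 hp1 α hα hαp V
end

section
/- Let S be a finite nonempty set, let α ∈ (0,1], let H > 0, and let V : S → ℝ satisfy 0 ≤ V(s) ≤ H for all s ∈ S. Let 𝒬 be a nonempty set of probability mass functions on S and let p ∈ 𝒬. Then 0 ≤ sup_{q ∈ 𝒬} CVaR^α_q(V) − CVaR^α_p(V) ≤ (1/α) · sup_{x ∈ [0,H]} ( sup_{q ∈ 𝒬} Σ_{s∈S} q(s)(x − V(s))⁺ − inf_{q ∈ 𝒬} Σ_{s∈S} q(s)(x − V(s))⁺ ); that is, the optimistic CVaR over a confidence set containing the true distribution exceeds the true CVaR by at most 1/α times the maximal diameter of the confidence set measured on the functions s ↦ (x − V(s))⁺, x ∈ [0,H]. -/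
/-!
Because `V` takes values in `[0, H]`, the objective `x - (1/α) 𝔼_q (x - V)⁺` is increasing on
`x ≤ 0` and (as `1/α ≥ 1`) non-increasing on `x ≥ H`, so every CVaR is a supremum over `[0, H]`.
For fixed `x` the objectives of `q` and `p` differ by `1/α` times the difference of the expected
shortfalls, which is at most the diameter of `𝒬` at `x`.
-/

open Set

section

variable {S : Type*} [Fintype S]

noncomputable def shortfall (q V : S → ℝ) (x : ℝ) : ℝ :=
  ∑ s, q s * max (x - V s) 0

variable {α H x : ℝ} {q V : S → ℝ}

lemma shortfall_nonneg (hq : ∀ s, 0 ≤ q s) (x : ℝ) : 0 ≤ shortfall q V x :=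
  Finset.sum_nonneg fun s _ => mul_nonneg (hq s) (le_max_right _ _)

lemma shortfall_of_nonpos (hV : ∀ s, 0 ≤ V s) (hx : x ≤ 0) : shortfall q V x = 0 :=
  Finset.sum_eq_zero fun s _ => by rw [max_eq_right (by linarith [hV s]), mul_zero]

lemma shortfall_of_forall_le (hq : ∑ s, q s = 1) (hx : ∀ s, V s ≤ x) :
    shortfall q V x = x - ∑ s, q s * V s := by
  calc shortfall q V x = ∑ s, (q s * x - q s * V s) :=
        Finset.sum_congr rfl fun s _ => by rw [max_eq_left (sub_nonneg.2 (hx s))]; ring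
    _ = x - ∑ s, q s * V s := by rw [Finset.sum_sub_distrib, ← Finset.sum_mul, hq, one_mul]

lemma shortfall_le (hq : q ∈ stdSimplex ℝ S) (hV : ∀ s, 0 ≤ V s) (hx : 0 ≤ x) :
    shortfall q V x ≤ x :=
  calc shortfall q V x ≤ ∑ s, q s * x :=
        Finset.sum_le_sum fun s _ =>
          mul_le_mul_of_nonneg_left (max_le (by linarith [hV s]) hx) (hq.1 s)
    _ = x := by rw [← Finset.sum_mul, hq.2, one_mul]

lemma sub_mul_shortfall_le (hq : ∀ s, 0 ≤ q s) (hα : 0 < α) (x : ℝ) :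
    x - (1 / α) * shortfall q V x ≤ x :=
  sub_le_self _ (mul_nonneg (by positivity) (shortfall_nonneg hq x))

lemma sub_mul_shortfall_le_projIcc (hα : α ∈ Ioc 0 1) (hH : 0 ≤ H) (hV : ∀ s, V s ∈ Icc 0 H)
    (hq : q ∈ stdSimplex ℝ S) (x : ℝ) :
    x - (1 / α) * shortfall q V x
      ≤ projIcc 0 H hH x - (1 / α) * shortfall q V (projIcc 0 H hH x) := by
  rcases le_total x 0 with hx0 | hx0
  · rw [projIcc_of_le_left hH hx0, shortfall_of_nonpos (fun s => (hV s).1) hx0,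
      shortfall_of_nonpos (fun s => (hV s).1) le_rfl]
    simpa using hx0
  rcases le_total H x with hxH | hxH
  · rw [projIcc_of_right_le hH hxH, shortfall_of_forall_le hq.2 fun s => (hV s).2.trans hxH,
      shortfall_of_forall_le hq.2 fun s => (hV s).2]
    have : 1 ≤ 1 / α := one_le_one_div hα.1 hα.2
    nlinarith
  · rw [projIcc_of_mem hH ⟨hx0, hxH⟩]

lemma bddAbove_range_sub_mul_shortfall_Icc (hq : ∀ s, 0 ≤ q s) (hα : 0 < α) :
    BddAbove (range fun x : Icc 0 H => (x : ℝ) - (1 / α) * shortfall q V x) :=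
  ⟨H, by rintro _ ⟨x, rfl⟩; exact (sub_mul_shortfall_le hq hα x).trans x.2.2⟩

lemma cvar_eq_iSup_Icc (hα : α ∈ Ioc 0 1) (hH : 0 ≤ H) (hV : ∀ s, V s ∈ Icc 0 H)
    (hq : q ∈ stdSimplex ℝ S) :
    cvar α q V = ⨆ x : Icc 0 H, ((x : ℝ) - (1 / α) * shortfall q V x) := by
  have : Nonempty (Icc 0 H) := ⟨⟨0, left_mem_Icc.2 hH⟩⟩
  have le_iSup_Icc : ∀ x : ℝ, x - (1 / α) * shortfall q V x
      ≤ ⨆ x : Icc 0 H, ((x : ℝ) - (1 / α) * shortfall q V x) := fun x =>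
    (sub_mul_shortfall_le_projIcc hα hH hV hq x).trans
      (le_ciSup (bddAbove_range_sub_mul_shortfall_Icc hq.1 hα.1) (projIcc 0 H hH x))
  exact le_antisymm (ciSup_le le_iSup_Icc)
    (ciSup_le fun x => le_ciSup ⟨_, forall_mem_range.2 le_iSup_Icc⟩ (x : ℝ))

lemma sub_mul_shortfall_le_cvar (hα : α ∈ Ioc 0 1) (hV : ∀ s, V s ∈ Icc 0 H)
    (hq : q ∈ stdSimplex ℝ S) (hx : x ∈ Icc 0 H) :
    x - (1 / α) * shortfall q V x ≤ cvar α q V := by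
  rw [cvar_eq_iSup_Icc hα (hx.1.trans hx.2) hV hq]
  exact le_ciSup (bddAbove_range_sub_mul_shortfall_Icc hq.1 hα.1) ⟨x, hx⟩

lemma cvar_le (hα : α ∈ Ioc 0 1) (hH : 0 ≤ H) (hV : ∀ s, V s ∈ Icc 0 H)
    (hq : q ∈ stdSimplex ℝ S) : cvar α q V ≤ H := by
  have : Nonempty (Icc 0 H) := ⟨⟨0, left_mem_Icc.2 hH⟩⟩
  rw [cvar_eq_iSup_Icc hα hH hV hq]
  exact ciSup_le fun x => (sub_mul_shortfall_le hq.1 hα.1 x).trans x.2.2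

lemma le_iSup_cvar {𝒬 : Set (S → ℝ)} {p : S → ℝ} (hα : α ∈ Ioc 0 1) (hH : 0 ≤ H)
    (hV : ∀ s, V s ∈ Icc 0 H) (h𝒬 : 𝒬 ⊆ stdSimplex ℝ S) (hp : p ∈ 𝒬) :
    cvar α p V ≤ ⨆ q : 𝒬, cvar α q V := by
  have bddAbove_cvar : BddAbove (range fun q : 𝒬 => cvar α q V) :=
    ⟨H, by rintro _ ⟨q, rfl⟩; exact cvar_le hα hH hV (h𝒬 q.2)⟩
  exact le_ciSup bddAbove_cvar ⟨p, hp⟩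

lemma iSup_cvar_sub_cvar_le {𝒬 : Set (S → ℝ)} {p : S → ℝ} (hα : α ∈ Ioc 0 1) (hH : 0 ≤ H)
    (hV : ∀ s, V s ∈ Icc 0 H) (h𝒬 : 𝒬 ⊆ stdSimplex ℝ S) (hp : p ∈ 𝒬) :
    (⨆ q : 𝒬, cvar α q V) - cvar α p V
      ≤ (1 / α) * ⨆ x : Icc 0 H,
          ((⨆ q : 𝒬, shortfall q V x) - ⨅ q : 𝒬, shortfall q V x) := by
  have : Nonempty 𝒬 := ⟨⟨p, hp⟩⟩
  have : Nonempty (Icc 0 H) := ⟨⟨0, left_mem_Icc.2 hH⟩⟩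
  have bddAbove_shortfall (x : Icc 0 H) : BddAbove (range fun q : 𝒬 => shortfall q V x) :=
    ⟨x, forall_mem_range.2 fun q => shortfall_le (h𝒬 q.2) (fun s => (hV s).1) x.2.1⟩
  have bddBelow_shortfall (x : Icc 0 H) : BddBelow (range fun q : 𝒬 => shortfall q V x) :=
    ⟨0, forall_mem_range.2 fun q => shortfall_nonneg (h𝒬 q.2).1 x⟩
  have bddAbove_diam : BddAbove (range fun x : Icc 0 H =>
      (⨆ q : 𝒬, shortfall q V x) - ⨅ q : 𝒬, shortfall q V x) :=
    ⟨H, forall_mem_range.2 fun x => by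
      have hsup : (⨆ q : 𝒬, shortfall q V x) ≤ x :=
        ciSup_le fun q => shortfall_le (h𝒬 q.2) (fun s => (hV s).1) x.2.1
      have hinf : 0 ≤ ⨅ q : 𝒬, shortfall q V x :=
        le_ciInf fun q => shortfall_nonneg (h𝒬 q.2).1 x
      linarith [x.2.2]⟩
  rw [sub_le_iff_le_add']
  refine ciSup_le fun q => ?_
  rw [cvar_eq_iSup_Icc hα hH hV (h𝒬 q.2)]
  refine ciSup_le fun x => ?_
  have hshortfall : shortfall p V x - shortfall q V x
      ≤ (⨆ q : 𝒬, shortfall q V x) - ⨅ q : 𝒬, shortfall q V x :=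
    sub_le_sub (le_ciSup (bddAbove_shortfall x) ⟨p, hp⟩) (ciInf_le (bddBelow_shortfall x) q)
  have hα' : 0 ≤ 1 / α := by have := hα.1; positivity
  calc (x : ℝ) - (1 / α) * shortfall q V x
      = (x - (1 / α) * shortfall p V x) + (1 / α) * (shortfall p V x - shortfall q V x) := by
        ring
    _ ≤ cvar α p V + (1 / α) * ⨆ x : Icc 0 H,
          ((⨆ q : 𝒬, shortfall q V x) - ⨅ q : 𝒬, shortfall q V x) := by
        gcongr
        · exact sub_mul_shortfall_le_cvar hα hV (h𝒬 hp) x.2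
        · exact hshortfall.trans (le_ciSup bddAbove_diam x)

end

theorem stmt_13_general {S : Type*} [Fintype S]
    (α H : ℝ) (hα : α ∈ Set.Ioc (0 : ℝ) 1) (hH : 0 < H)
    (V : S → ℝ) (hV : ∀ s, V s ∈ Set.Icc (0 : ℝ) H)
    (𝒬 : Set (S → ℝ)) (h𝒬 : ∀ q ∈ 𝒬, (∀ s, 0 ≤ q s) ∧ ∑ s, q s = 1)
    (p : S → ℝ) (hp : p ∈ 𝒬) :
    0 ≤ (⨆ q : 𝒬, cvar α q V) - cvar α p V ∧
      (⨆ q : 𝒬, cvar α q V) - cvar α p V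
        ≤ (1 / α) * ⨆ x : Set.Icc (0 : ℝ) H,
            ((⨆ q : 𝒬, ∑ s, (q : S → ℝ) s * max ((x : ℝ) - V s) 0)
              - ⨅ q : 𝒬, ∑ s, (q : S → ℝ) s * max ((x : ℝ) - V s) 0) :=
  ⟨sub_nonneg.2 (le_iSup_cvar hα hH.le hV h𝒬 hp), iSup_cvar_sub_cvar_le hα hH.le hV h𝒬 hp⟩

/-- The optimistic CVaR over a confidence set `𝒬` containing the true
distribution `p` exceeds the true CVaR by at most `1/α` times the maximal
diameter of `𝒬` measured on the functions `s ↦ (x − V(s))⁺`, `x ∈ [0,H]`. -/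
theorem stmt_13 {S : Type*} [Fintype S] [Nonempty S]
    (α H : ℝ) (hα : α ∈ Set.Ioc (0 : ℝ) 1) (hH : 0 < H)
    (V : S → ℝ) (hV : ∀ s, V s ∈ Set.Icc (0 : ℝ) H)
    (𝒬 : Set (S → ℝ)) (h𝒬 : ∀ q ∈ 𝒬, (∀ s, 0 ≤ q s) ∧ ∑ s, q s = 1)
    (p : S → ℝ) (hp : p ∈ 𝒬) :
    0 ≤ (⨆ q : 𝒬, cvar α q V) - cvar α p V ∧
      (⨆ q : 𝒬, cvar α q V) - cvar α p V
        ≤ (1 / α) * ⨆ x : Set.Icc (0 : ℝ) H,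
            ((⨆ q : 𝒬, ∑ s, (q : S → ℝ) s * max ((x : ℝ) - V s) 0)
              - ⨅ q : 𝒬, ∑ s, (q : S → ℝ) s * max ((x : ℝ) - V s) 0) :=
  stmt_13_general α H hα hH V hV 𝒬 h𝒬 p hp
end

section
/- Let K ≥ 1 and d ≥ 1 be integers, let H > 0 and γ ≥ 0 be reals, and let G_1, …, G_K be reals with 0 ≤ G_k ≤ H for every k. Suppose that for every real ε ≥ 1/√K, the number of indices k ∈ {1,…,K} with G_k ≥ ε is at most d·(4γ/ε² + 1). Then Σ_{k=1}^K G_k² ≤ 1 + d·H² + 4γ·d·(log K + 1), where log denotes the natural logarithm. (This is the refined elliptical potential bound: the sum of squares grows only logarithmically in K.) -/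
/-!
Sort the values decreasingly. The `i`-th largest value `x` (from `0`) is exceeded or matched by
at least `i + 1` values, so if `x ≥ 1/√K` the counting hypothesis gives
`i + 1 ≤ d (4γ/x² + 1)`, i.e. `x² ≤ 4γd/(i + 1 - d)` once `i ≥ d`. Values below `1/√K`
contribute at most `K · 1/K = 1`, the `d` largest at most `d H²`, and the remaining bounds sum
to `4γd` times a harmonic number, which is at most `4γd (log K + 1)`.
-/

open Finset Real

theorem exists_perm_antitone_comp {α : Type*} [LinearOrder α] {n : ℕ} (f : Fin n → α) :
    ∃ σ : Equiv.Perm (Fin n), Antitone (f ∘ σ) :=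
  ⟨Fin.revPerm.trans (Tuple.sort f), (Tuple.monotone_sort f).comp_antitone Fin.rev_anti⟩

theorem add_one_le_card_filter_le_of_antitone {α : Type*} [LinearOrder α] {n : ℕ}
    (f : Fin n → α) (σ : Equiv.Perm (Fin n)) (hσ : Antitone (f ∘ σ)) (i : Fin n) :
    (i : ℕ) + 1 ≤ #{k | f (σ i) ≤ f k} :=
  calc (i : ℕ) + 1 = #(Iic i) := (Fin.card_Iic i).symm
    _ ≤ _ := card_le_card_of_injOn σ
        (fun j hj ↦ by simpa using hσ (mem_Iic.mp hj)) σ.injective.injOn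

theorem sq_le_of_le_mul_div_sq_add_one {ε γ d m : ℝ} (hε : 0 < ε) (hdm : d < m)
    (h : m ≤ d * (4 * γ / ε ^ 2 + 1)) : ε ^ 2 ≤ 4 * γ * d * (m - d)⁻¹ := by
  have hε2 : 0 < ε ^ 2 := by positivity
  have : (m - d) * ε ^ 2 ≤ 4 * γ * d := by
    rw [mul_add, mul_one, mul_div_assoc', div_add' _ _ _ hε2.ne', le_div_iff₀ hε2] at h
    linarith
  rw [← div_eq_mul_inv, le_div_iff₀ (sub_pos.mpr hdm)]
  linarith

theorem sum_range_ite_lt_le (K d : ℕ) {a : ℝ} (ha : 0 ≤ a) (c : ℕ → ℝ) :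
    ∑ i ∈ range K, (if i < d then a else c i) ≤ d * a + ∑ i ∈ Ico d K, c i := by
  rw [sum_ite]
  have hIco : {i ∈ range K | ¬i < d} = Ico d K := by
    ext; simp only [mem_filter, mem_range, mem_Ico]; omega
  rw [hIco]
  gcongr
  calc ∑ _i ∈ range K with _i < d, a ≤ ∑ _i ∈ range d, a :=
        sum_le_sum_of_subset_of_nonneg
          (fun i hi ↦ by simp only [mem_filter, mem_range] at hi ⊢; omega) (fun _ _ _ ↦ ha)
    _ = d * a := by simp

theorem sum_Ico_inv_sub_le_one_add_log (d K : ℕ) :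
    ∑ i ∈ Ico d K, ((i : ℝ) + 1 - d)⁻¹ ≤ 1 + log K :=
  calc ∑ i ∈ Ico d K, ((i : ℝ) + 1 - d)⁻¹ = ∑ m ∈ range (K - d), ((m : ℝ) + 1)⁻¹ := by
        rw [sum_Ico_eq_sum_range]; push_cast; ring_nf
    _ ≤ ∑ m ∈ range K, ((m : ℝ) + 1)⁻¹ :=
        sum_le_sum_of_subset_of_nonneg (range_subset_range.mpr (K.sub_le d))
          (fun _ _ _ ↦ by positivity)
    _ = harmonic K := by simp [harmonic]
    _ ≤ 1 + log K := harmonic_le_one_add_log K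

/-- The bound on the square of the `i`-th largest value, `i` counted from `0`. -/
noncomputable def rankBound (K d : ℕ) (H γ : ℝ) (i : ℕ) : ℝ :=
  1 / K + if i < d then H ^ 2 else 4 * γ * d * ((i : ℝ) + 1 - d)⁻¹

theorem sq_le_rankBound {K d i : ℕ} (hK : 0 < K) {H γ x : ℝ} (hγ : 0 ≤ γ) (hx : 0 ≤ x)
    (hxH : x ≤ H) (hrank : 1 / √K ≤ x → ((i : ℝ) + 1) ≤ d * (4 * γ / x ^ 2 + 1)) :
    x ^ 2 ≤ rankBound K d H γ i := by
  have hKpos : (0 : ℝ) < K := by exact_mod_cast hK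
  have hinv : 0 < 1 / (K : ℝ) := by positivity
  unfold rankBound
  split_ifs with hid
  · nlinarith
  have hdi : (d : ℝ) < i + 1 := by exact_mod_cast (by omega : d < i + 1)
  obtain hsmall | hlarge := lt_or_ge x (1 / √K)
  · have : x ^ 2 ≤ 1 / K := by
      calc x ^ 2 ≤ (1 / √K) ^ 2 := pow_le_pow_left₀ hx hsmall.le 2
        _ = 1 / K := by rw [div_pow, one_pow, sq_sqrt hKpos.le]
    have := sub_pos.mpr hdi
    have : 0 ≤ 4 * γ * d * ((i : ℝ) + 1 - d)⁻¹ := by positivity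
    linarith
  · have := sq_le_of_le_mul_div_sq_add_one (lt_of_lt_of_le (by positivity) hlarge) hdi
      (hrank hlarge)
    linarith

theorem sum_range_rankBound_le {K : ℕ} (hK : 0 < K) (d : ℕ) (H : ℝ) {γ : ℝ} (hγ : 0 ≤ γ) :
    ∑ i ∈ range K, rankBound K d H γ i ≤ 1 + d * H ^ 2 + 4 * γ * d * (log K + 1) :=
  calc ∑ i ∈ range K, rankBound K d H γ i
      ≤ 1 + (d * H ^ 2 + 4 * γ * d * ∑ i ∈ Ico d K, ((i : ℝ) + 1 - d)⁻¹) := by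
        unfold rankBound
        rw [sum_add_distrib, mul_sum]
        gcongr
        · simp [hK.ne']
        · exact sum_range_ite_lt_le K d (sq_nonneg H) _
    _ ≤ 1 + d * H ^ 2 + 4 * γ * d * (log K + 1) := by
        have := sum_Ico_inv_sub_le_one_add_log d K
        have : 0 ≤ 4 * γ * d := by positivity
        nlinarith

theorem stmt_14_general (K d : ℕ) (hK : 1 ≤ K)
    (H γ : ℝ) (hγ : 0 ≤ γ)
    (G : Fin K → ℝ) (hG : ∀ k, 0 ≤ G k ∧ G k ≤ H)
    (hcount : ∀ ε : ℝ, 1 / Real.sqrt K ≤ ε →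
      ((Finset.univ.filter (fun k => ε ≤ G k)).card : ℝ)
        ≤ d * (4 * γ / ε ^ 2 + 1)) :
    ∑ k, G k ^ 2 ≤ 1 + d * H ^ 2 + 4 * γ * d * (Real.log K + 1) := by
  obtain ⟨σ, hσ⟩ := exists_perm_antitone_comp G
  have hterm (i : Fin K) : G (σ i) ^ 2 ≤ rankBound K d H γ i :=
    sq_le_rankBound hK hγ (hG _).1 (hG _).2 fun hlarge ↦
      le_trans (by exact_mod_cast add_one_le_card_filter_le_of_antitone G σ hσ i)
        (hcount _ hlarge)
  calc ∑ k, G k ^ 2 = ∑ i, G (σ i) ^ 2 := (Equiv.sum_comp σ (fun k ↦ G k ^ 2)).symm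
    _ ≤ ∑ i ∈ range K, rankBound K d H γ i :=
        (sum_le_sum fun i _ ↦ hterm i).trans_eq (Fin.sum_univ_eq_sum_range _ K)
    _ ≤ 1 + d * H ^ 2 + 4 * γ * d * (Real.log K + 1) := sum_range_rankBound_le hK d H hγ

/-- Refined elliptical potential bound: if `0 ≤ G_k ≤ H` and for every
`ε ≥ 1/√K` the number of indices with `G_k ≥ ε` is at most `d(4γ/ε² + 1)`,
then `Σ_k G_k² ≤ 1 + d H² + 4γd(log K + 1)`. -/
theorem stmt_14 (K d : ℕ) (hK : 1 ≤ K) (hd : 1 ≤ d)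
    (H γ : ℝ) (hH : 0 < H) (hγ : 0 ≤ γ)
    (G : Fin K → ℝ) (hG : ∀ k, 0 ≤ G k ∧ G k ≤ H)
    (hcount : ∀ ε : ℝ, 1 / Real.sqrt K ≤ ε →
      ((Finset.univ.filter (fun k => ε ≤ G k)).card : ℝ)
        ≤ d * (4 * γ / ε ^ 2 + 1)) :
    ∑ k, G k ^ 2 ≤ 1 + d * H ^ 2 + 4 * γ * d * (Real.log K + 1) :=
  stmt_14_general K d hK H γ hγ G hG hcount
end
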